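/- arXiv:2208.07569 — 4 statements merged into one kernel-verified Lean document; each statement's English description precedes it below -/
import Mathlib

section
/- Let ξ ∈ ℂ[z₁,...,z_d] with ξ(0) ≠ 0, and write ξ = ξ₁⋯ξ_r as a product of irreducible factors. Then there exist τ ∈ 𝕋 (the unit circle) and indices j₁,...,j_l such that ξ̃/ξ = τ · (ξ̃_{j₁}⋯ξ̃_{j_l})/(ξ_{j₁}⋯ξ_{j_l}) where the numerator and denominator on the right are coprime polynomials. -/
open MvPolynomial

/-- `q` is the reflection of `p`: on the torus-complement `(ℂ*)^d`,
`q(z) = z^n · conj(p(1/conj z))` where `n` is the multidegree of `p`. -/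
def reflects {d : ℕ} (p q : MvPolynomial (Fin d) ℂ) : Prop :=
  ∀ z : Fin d → ℂ, (∀ j, z j ≠ 0) →
    eval z q = (∏ j : Fin d, z j ^ p.degreeOf j) *
      (starRingEnd ℂ) (eval (fun j => ((starRingEnd ℂ) (z j))⁻¹) p)

variable {d : ℕ}

lemma eval_units_eq {p q : MvPolynomial (Fin d) ℂ}
    (h : ∀ z : Fin d → ℂ, (∀ j, z j ≠ 0) → eval z p = eval z q) : p = q := by
  have hX : (∏ j : Fin d, (X j : MvPolynomial (Fin d) ℂ)) ≠ 0 :=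
    Finset.prod_ne_zero_iff.mpr fun j _ => X_ne_zero j
  refine mul_left_cancel₀ hX (MvPolynomial.funext fun z => ?_)
  by_cases hz : ∀ j, z j ≠ 0
  · rw [map_mul, map_mul, h z hz]
  · push_neg at hz
    obtain ⟨j, hj⟩ := hz
    have hzero : eval z (∏ j : Fin d, (X j : MvPolynomial (Fin d) ℂ)) = 0 := by
      rw [map_prod]
      exact Finset.prod_eq_zero (Finset.mem_univ j) (by simp [hj])
    rw [map_mul, map_mul, hzero, zero_mul, zero_mul]

lemma reflects_unique {p q q' : MvPolynomial (Fin d) ℂ}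
    (h : reflects p q) (h' : reflects p q') : q = q' :=
  eval_units_eq fun z hz => by rw [h z hz, h' z hz]

lemma degreeOf_mul' {p q : MvPolynomial (Fin d) ℂ} (hp : p ≠ 0) (hq : q ≠ 0) (j : Fin d) :
    degreeOf j (p * q) = degreeOf j p + degreeOf j q := by
  cases d with
  | zero => exact j.elim0
  | succ n =>
    have key : ∀ s : MvPolynomial (Fin (n + 1)) ℂ, s ≠ 0 →
        degreeOf j s = (finSuccEquiv ℂ n (rename (Equiv.swap j 0) s)).natDegree := by
      intro s _
      rw [natDegree_finSuccEquiv]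
      have := MvPolynomial.degreeOf_rename_of_injective
        (p := s) (f := (Equiv.swap j 0 : Fin (n+1) → Fin (n+1))) (Equiv.swap j 0).injective j
      rw [Equiv.swap_apply_left] at this
      rw [this]
    have hinj := MvPolynomial.rename_injective (R := ℂ)
      (Equiv.swap j 0 : Fin (n+1) → Fin (n+1)) (Equiv.swap j 0).injective
    have hrp : rename (Equiv.swap j 0 : Fin (n+1) → Fin (n+1)) p ≠ 0 :=
      fun h => hp (hinj (by rw [h, map_zero]))
    have hrq : rename (Equiv.swap j 0 : Fin (n+1) → Fin (n+1)) q ≠ 0 :=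
      fun h => hq (hinj (by rw [h, map_zero]))
    have hfp : finSuccEquiv ℂ n (rename (Equiv.swap j 0) p) ≠ 0 := by
      simpa using hrp
    have hfq : finSuccEquiv ℂ n (rename (Equiv.swap j 0) q) ≠ 0 := by
      simpa using hrq
    rw [key p hp, key q hq, key (p * q) (mul_ne_zero hp hq), map_mul, map_mul,
      Polynomial.natDegree_mul hfp hfq]

lemma degreeOf_one' (j : Fin d) : degreeOf j (1 : MvPolynomial (Fin d) ℂ) = 0 := by
  rw [show (1 : MvPolynomial (Fin d) ℂ) = C 1 from (map_one C).symm, degreeOf_C]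

lemma degreeOf_prod' {ι : Type*} (s : Finset ι) (g : ι → MvPolynomial (Fin d) ℂ)
    (hg : ∀ i ∈ s, g i ≠ 0) (j : Fin d) :
    degreeOf j (∏ i ∈ s, g i) = ∑ i ∈ s, degreeOf j (g i) := by
  classical
  induction s using Finset.induction with
  | empty => simp [degreeOf_one']
  | @insert a s ha ih =>
    rw [Finset.prod_insert ha, Finset.sum_insert ha,
      degreeOf_mul' (hg a (Finset.mem_insert_self a s))
        (Finset.prod_ne_zero_iff.mpr fun i hi => hg i (Finset.mem_insert_of_mem hi)) j,
      ih fun i hi => hg i (Finset.mem_insert_of_mem hi)]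

lemma reflects_mul {p p' q q' : MvPolynomial (Fin d) ℂ} (hp : p ≠ 0) (hp' : p' ≠ 0)
    (h : reflects p q) (h' : reflects p' q') : reflects (p * p') (q * q') := by
  intro z hz
  have hprod : (∏ j, z j ^ (p * p').degreeOf j)
      = (∏ j, z j ^ p.degreeOf j) * ∏ j, z j ^ p'.degreeOf j := by
    rw [← Finset.prod_mul_distrib]
    exact Finset.prod_congr rfl fun j _ => by rw [degreeOf_mul' hp hp' j, pow_add]
  simp only [map_mul]
  rw [h z hz, h' z hz, hprod]
  ring

lemma reflects_one : reflects (1 : MvPolynomial (Fin d) ℂ) 1 := by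
  intro z hz
  simp [degreeOf_one']

lemma reflects_prod {ι : Type*} (s : Finset ι) (g h : ι → MvPolynomial (Fin d) ℂ)
    (hg : ∀ i ∈ s, g i ≠ 0) (hr : ∀ i ∈ s, reflects (g i) (h i)) :
    reflects (∏ i ∈ s, g i) (∏ i ∈ s, h i) := by
  classical
  induction s using Finset.induction with
  | empty => simpa using reflects_one
  | @insert a s ha ih =>
    rw [Finset.prod_insert ha, Finset.prod_insert ha]
    exact reflects_mul (hg a (Finset.mem_insert_self a s))
      (Finset.prod_ne_zero_iff.mpr fun i hi => hg i (Finset.mem_insert_of_mem hi))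
      (hr a (Finset.mem_insert_self a s))
      (ih (fun i hi => hg i (Finset.mem_insert_of_mem hi))
        (fun i hi => hr i (Finset.mem_insert_of_mem hi)))

lemma reflects_smul {p q : MvPolynomial (Fin d) ℂ} {c : ℂ} (hc : c ≠ 0) (hp : p ≠ 0)
    (h : reflects p q) : reflects (c • p) ((starRingEnd ℂ c) • q) := by
  have hdeg : ∀ j, (c • p).degreeOf j = p.degreeOf j := by
    intro j
    rw [smul_eq_C_mul, degreeOf_mul' (by simpa using hc) hp j, degreeOf_C, zero_add]
  intro z hz
  have hpr : (∏ j, z j ^ (c • p).degreeOf j) = ∏ j, z j ^ p.degreeOf j :=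
    Finset.prod_congr rfl fun j _ => by rw [hdeg j]
  rw [hpr, smul_eq_C_mul, smul_eq_C_mul, map_mul, map_mul, eval_C, eval_C, map_mul, h z hz]
  ring

noncomputable def mdeg (p : MvPolynomial (Fin d) ℂ) : Fin d →₀ ℕ :=
  Finsupp.equivFunOnFinite.symm fun j => degreeOf j p

@[simp] lemma mdeg_apply (p : MvPolynomial (Fin d) ℂ) (j : Fin d) :
    mdeg p j = degreeOf j p := rfl

noncomputable def mrefl (p : MvPolynomial (Fin d) ℂ) : MvPolynomial (Fin d) ℂ :=
  ∑ m ∈ p.support, monomial (mdeg p - m) (starRingEnd ℂ (coeff m p))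

lemma reflects_mrefl (p : MvPolynomial (Fin d) ℂ) : reflects p (mrefl p) := by
  intro z hz
  have hLHS : eval z (mrefl p)
      = ∑ m ∈ p.support, (starRingEnd ℂ) (coeff m p) * ∏ j, z j ^ (mdeg p - m) j := by
    rw [mrefl, map_sum]
    refine Finset.sum_congr rfl fun m hm => ?_
    rw [eval_monomial, Finsupp.prod_fintype]
    exact fun j => pow_zero (z j)
  rw [hLHS, eval_eq', map_sum, Finset.mul_sum]
  refine Finset.sum_congr rfl fun m hm => ?_
  rw [map_mul, map_prod]
  have hle : ∀ j, m j ≤ degreeOf j p := fun j => monomial_le_degreeOf j hm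
  have hterm : ∀ j : Fin d,
      z j ^ (mdeg p - m) j = z j ^ degreeOf j p * ((starRingEnd ℂ) (((starRingEnd ℂ) (z j))⁻¹ ^ m j)) := by
    intro j
    rw [map_pow, map_inv₀, Complex.conj_conj, Finsupp.tsub_apply, mdeg_apply,
      pow_sub₀ (z j) (hz j) (hle j), inv_pow]
  calc (starRingEnd ℂ) (coeff m p) * ∏ j, z j ^ (mdeg p - m) j
      = (starRingEnd ℂ) (coeff m p) *
        ∏ j, (z j ^ degreeOf j p * (starRingEnd ℂ) (((starRingEnd ℂ) (z j))⁻¹ ^ m j)) :=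
        by rw [Finset.prod_congr rfl fun j _ => hterm j]
    _ = (∏ j, z j ^ degreeOf j p) *
        ((starRingEnd ℂ) (coeff m p) * ∏ j, (starRingEnd ℂ) (((starRingEnd ℂ) (z j))⁻¹ ^ m j)) := by
        rw [Finset.prod_mul_distrib]; ring

lemma degreeOf_mrefl_le (p : MvPolynomial (Fin d) ℂ) (j : Fin d) :
    degreeOf j (mrefl p) ≤ degreeOf j p := by
  rw [degreeOf_le_iff]
  intro m hm
  rw [mem_support_iff, mrefl] at hm
  have : ∃ m' ∈ p.support, coeff m (monomial (mdeg p - m') ((starRingEnd ℂ) (coeff m' p))) ≠ 0 := by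
    by_contra hcon
    push_neg at hcon
    exact hm (by rw [coeff_sum]; exact Finset.sum_eq_zero hcon)
  obtain ⟨m', hm', hne⟩ := this
  rw [coeff_monomial] at hne
  by_cases he : mdeg p - m' = m
  · rw [← he, Finsupp.tsub_apply, mdeg_apply]
    exact Nat.sub_le _ _
  · simp [he] at hne

lemma coeff_mdeg_mrefl {p : MvPolynomial (Fin d) ℂ} (h0 : coeff 0 p ≠ 0) :
    coeff (mdeg p) (mrefl p) = (starRingEnd ℂ) (coeff 0 p) := by
  rw [mrefl, coeff_sum]
  rw [Finset.sum_eq_single (0 : Fin d →₀ ℕ)]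
  · simp [coeff_monomial]
  · intro m hm hm0
    rw [coeff_monomial, if_neg]
    intro hEq
    apply hm0
    ext j
    have h1 : m j ≤ degreeOf j p := monomial_le_degreeOf j hm
    have h2 := DFunLike.congr_fun hEq j
    rw [Finsupp.tsub_apply, mdeg_apply] at h2
    simp only [Finsupp.coe_zero, Pi.zero_apply]
    omega
  · intro h
    exact absurd (mem_support_iff.mpr h0) h

lemma degreeOf_reflects {p q : MvPolynomial (Fin d) ℂ} (h0 : coeff 0 p ≠ 0)
    (h : reflects p q) (j : Fin d) : degreeOf j q = degreeOf j p := by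
  have hq : q = mrefl p := reflects_unique h (reflects_mrefl p)
  subst hq
  refine le_antisymm (degreeOf_mrefl_le p j) ?_
  have hmem : mdeg p ∈ (mrefl p).support := by
    rw [mem_support_iff, coeff_mdeg_mrefl h0]
    simpa using h0
  simpa using monomial_le_degreeOf j hmem

lemma reflects_symm {p q : MvPolynomial (Fin d) ℂ} (h0 : coeff 0 p ≠ 0)
    (h : reflects p q) : reflects q p := by
  have hdeg := degreeOf_reflects h0 h
  intro z hz
  have hz' : ∀ j, ((starRingEnd ℂ) (z j))⁻¹ ≠ 0 := by
    intro j
    simpa using hz j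
  have key := h (fun j => ((starRingEnd ℂ) (z j))⁻¹) hz'
  simp only [map_inv₀, Complex.conj_conj, inv_inv] at key
  have hpt : (fun j => z j) = z := rfl
  rw [hpt] at key
  rw [show (∏ j, z j ^ q.degreeOf j) = ∏ j, z j ^ p.degreeOf j from
    Finset.prod_congr rfl fun j _ => by rw [hdeg j], key, map_mul, map_prod]
  simp only [map_pow, map_inv₀, Complex.conj_conj]
  rw [← mul_assoc, ← Finset.prod_mul_distrib]
  have hone : ∏ j : Fin d, z j ^ p.degreeOf j * ((z j)⁻¹) ^ p.degreeOf j = 1 :=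
    Finset.prod_eq_one fun j _ => by
      rw [inv_pow, mul_inv_cancel₀ (pow_ne_zero _ (hz j))]
  rw [hone, one_mul]

lemma degreeOf_eq_zero_of_isUnit {u : MvPolynomial (Fin d) ℂ} (hu : IsUnit u) (j : Fin d) :
    degreeOf j u = 0 := by
  obtain ⟨v, hv⟩ := isUnit_iff_exists_inv.mp hu
  have hu0 : u ≠ 0 := fun h => by simp [h] at hv
  have hv0 : v ≠ 0 := fun h => by simp [h] at hv
  have h1 := degreeOf_mul' hu0 hv0 j
  rw [hv, degreeOf_one'] at h1
  omega

lemma eq_C_of_degreeOf_eq_zero {p : MvPolynomial (Fin d) ℂ} (h : ∀ j, degreeOf j p = 0) :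
    p = C (coeff 0 p) := by
  ext m
  rw [coeff_C]
  by_cases hm : (0 : Fin d →₀ ℕ) = m
  · rw [if_pos hm, ← hm]
  · rw [if_neg hm]
    by_contra hne
    have hmem : m ∈ p.support := mem_support_iff.mpr hne
    apply hm
    ext j
    have := monomial_le_degreeOf j hmem
    rw [h j] at this
    simp only [Finsupp.coe_zero, Pi.zero_apply]
    omega

lemma isUnit_of_degreeOf_eq_zero {p : MvPolynomial (Fin d) ℂ} (hp : p ≠ 0)
    (h : ∀ j, degreeOf j p = 0) : IsUnit p := by
  have hC := eq_C_of_degreeOf_eq_zero h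
  have hc : coeff 0 p ≠ 0 := fun hc => hp (by rw [hC, hc, map_zero])
  rw [hC]
  exact (isUnit_iff_ne_zero.mpr hc).map C

lemma unit_is_C {u : MvPolynomial (Fin d) ℂ} (hu : IsUnit u) :
    ∃ c : ℂ, c ≠ 0 ∧ u = C c := by
  refine ⟨coeff 0 u, ?_, eq_C_of_degreeOf_eq_zero (degreeOf_eq_zero_of_isUnit hu)⟩
  intro hc
  have := eq_C_of_degreeOf_eq_zero (degreeOf_eq_zero_of_isUnit hu)
  rw [hc, map_zero] at this
  exact hu.ne_zero this

lemma eval_zero_eq_coeff_zero (p : MvPolynomial (Fin d) ℂ) :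
    eval (0 : Fin d → ℂ) p = coeff 0 p := by
  rw [MvPolynomial.eval_zero, constantCoeff_eq]

lemma irreducible_reflect {p q : MvPolynomial (Fin d) ℂ} (hp : Irreducible p)
    (h0 : coeff 0 p ≠ 0) (h : reflects p q) : Irreducible q := by
  have hsym := reflects_symm h0 h
  have hq0 : q ≠ 0 := by
    intro hz
    apply hp.ne_zero
    apply eval_units_eq (q := 0)
    intro z hzz
    have := hsym z hzz
    rw [hz] at this
    simpa using this
  have hdeg := degreeOf_reflects h0 h
  constructor
  · intro hu
    apply hp.not_isUnit
    apply isUnit_of_degreeOf_eq_zero hp.ne_zero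
    intro j
    rw [← hdeg j]
    exact degreeOf_eq_zero_of_isUnit hu j
  · intro a b hab
    have ha0 : a ≠ 0 := fun h' => hq0 (by rw [hab, h', zero_mul])
    have hb0 : b ≠ 0 := fun h' => hq0 (by rw [hab, h', mul_zero])
    have hsym' := hsym
    rw [hab] at hsym'
    have hps : p = mrefl a * mrefl b :=
      reflects_unique hsym' (reflects_mul ha0 hb0 (reflects_mrefl a) (reflects_mrefl b))
    have hra0 : mrefl a ≠ 0 := fun h' => hp.ne_zero (by rw [hps, h', zero_mul])
    have hrb0 : mrefl b ≠ 0 := fun h' => hp.ne_zero (by rw [hps, h', mul_zero])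
    have hdab : ∀ j, degreeOf j a + degreeOf j b
        = degreeOf j (mrefl a) + degreeOf j (mrefl b) := by
      intro j
      rw [← degreeOf_mul' ha0 hb0 j, ← degreeOf_mul' hra0 hrb0 j, ← hab, ← hps, hdeg j]
    rcases hp.isUnit_or_isUnit hps with hu | hu
    · left
      apply isUnit_of_degreeOf_eq_zero ha0
      intro j
      have h1 := degreeOf_eq_zero_of_isUnit hu j
      have h2 := degreeOf_mrefl_le b j
      have h3 := hdab j
      omega
    · right
      apply isUnit_of_degreeOf_eq_zero hb0
      intro j
      have h1 := degreeOf_eq_zero_of_isUnit hu j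
      have h2 := degreeOf_mrefl_le a j
      have h3 := hdab j
      omega

/-- After cancelling paired irreducible factors, the reflection quotient equals a unimodular
constant times a quotient of coprime products of reflected/unreflected
irreducible factors. -/
theorem reflection_quotient_reduction {d r : ℕ}
    (f qf : Fin r → MvPolynomial (Fin d) ℂ) (ξ q : MvPolynomial (Fin d) ℂ)
    (hirr : ∀ i, Irreducible (f i)) (hξ : ξ = ∏ i : Fin r, f i)
    (h0 : eval (0 : Fin d → ℂ) ξ ≠ 0)
    (hq : reflects ξ q) (hqf : ∀ i, reflects (f i) (qf i)) :
    ∃ τ : ℂ, ‖τ‖ = 1 ∧ ∃ S : Finset (Fin r),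
      (∀ p : MvPolynomial (Fin d) ℂ,
        p ∣ (∏ i ∈ S, qf i) → p ∣ (∏ i ∈ S, f i) → IsUnit p) ∧
      q * (∏ i ∈ S, f i) = τ • ((∏ i ∈ S, qf i) * ξ) := by
  classical
  have hf0 : ∀ i, f i ≠ 0 := fun i => (hirr i).ne_zero
  have hev : ∀ i, coeff 0 (f i) ≠ 0 := by
    intro i hci
    apply h0
    rw [hξ, map_prod]
    refine Finset.prod_eq_zero (Finset.mem_univ i) ?_
    rw [eval_zero_eq_coeff_zero, hci]
  have hsym : ∀ i, reflects (qf i) (f i) := fun i => reflects_symm (hev i) (hqf i)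
  have hqf0 : ∀ i, qf i ≠ 0 := by
    intro i hzero
    apply hf0 i
    apply eval_units_eq (q := 0)
    intro z hz
    have := hsym i z hz
    rw [hzero] at this
    simpa using this
  have hqirr : ∀ i, Irreducible (qf i) := fun i =>
    irreducible_reflect (hirr i) (hev i) (hqf i)
  -- the set of cancellable subsets
  set good : Finset (Fin r) → Prop :=
    fun T => ∃ c : ℂ, c ≠ 0 ∧ (∏ i ∈ T, qf i) = c • (∏ i ∈ T, f i) with hgood
  have hgood_empty : good ∅ := ⟨1, one_ne_zero, by simp⟩
  set 𝒮 : Finset (Finset (Fin r)) := Finset.univ.filter good with h𝒮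
  have h𝒮ne : 𝒮.Nonempty := ⟨∅, Finset.mem_filter.mpr ⟨Finset.mem_univ _, hgood_empty⟩⟩
  obtain ⟨T, hT𝒮, hTsup⟩ := Finset.exists_mem_eq_sup 𝒮 h𝒮ne Finset.card
  have hmax : ∀ T', good T' → T'.card ≤ T.card := by
    intro T' hT'
    rw [← hTsup]
    exact Finset.le_sup (Finset.mem_filter.mpr ⟨Finset.mem_univ _, hT'⟩)
  obtain ⟨c, hc, hceq⟩ := (Finset.mem_filter.mp hT𝒮).2
  -- the norm of c is 1
  have hP0 : (∏ i ∈ T, f i) ≠ 0 := Finset.prod_ne_zero_iff.mpr fun i _ => hf0 i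
  have hPc0 : coeff 0 (∏ i ∈ T, f i) ≠ 0 := by
    rw [← eval_zero_eq_coeff_zero, map_prod]
    exact Finset.prod_ne_zero_iff.mpr fun i _ => by
      rw [eval_zero_eq_coeff_zero]; exact hev i
  have hrPQ : reflects (∏ i ∈ T, f i) (∏ i ∈ T, qf i) :=
    reflects_prod T f qf (fun i _ => hf0 i) (fun i _ => hqf i)
  have hrQP : reflects (∏ i ∈ T, qf i) (∏ i ∈ T, f i) := reflects_symm hPc0 hrPQ
  have hrQQ : reflects (∏ i ∈ T, qf i) ((starRingEnd ℂ c) • (∏ i ∈ T, qf i)) := by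
    have := reflects_smul hc hP0 hrPQ
    rwa [← hceq] at this
  have hkey : (∏ i ∈ T, f i) = (starRingEnd ℂ c * c) • (∏ i ∈ T, f i) := by
    have h3 := reflects_unique hrQP hrQQ
    nth_rewrite 1 [h3]
    rw [hceq, smul_smul]
  have hcc : starRingEnd ℂ c * c = 1 := by
    by_contra hne
    have h1 : (starRingEnd ℂ c * c) • (∏ i ∈ T, f i) = (1 : ℂ) • (∏ i ∈ T, f i) := by
      rw [← hkey, one_smul]
    exact hne (smul_left_injective ℂ hP0 h1)
  have hnorm : ‖c‖ = 1 := by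
    have h2 := congrArg norm hcc
    rw [norm_mul, norm_one, RCLike.norm_conj] at h2
    nlinarith [norm_nonneg c]
  refine ⟨c, hnorm, Tᶜ, ?_, ?_⟩
  · -- coprimality
    intro p hpq hpf
    by_contra hpu
    have hS0 : (∏ i ∈ Tᶜ, f i) ≠ 0 := Finset.prod_ne_zero_iff.mpr fun i _ => hf0 i
    have hp0 : p ≠ 0 := fun h' => hS0 (by rw [h'] at hpf; exact zero_dvd_iff.mp hpf)
    obtain ⟨π, hπirr, hπp⟩ := WfDvdMonoid.exists_irreducible_factor hpu hp0
    have hπprime : Prime π := UniqueFactorizationMonoid.irreducible_iff_prime.mp hπirr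
    obtain ⟨i, hiS, hif⟩ := hπprime.exists_mem_finset_dvd (hπp.trans hpf)
    obtain ⟨jj, hjS, hjq⟩ := hπprime.exists_mem_finset_dvd (hπp.trans hpq)
    have hassoc : Associated (f i) (qf jj) :=
      (hπirr.associated_of_dvd (hirr i) hif).symm.trans
        (hπirr.associated_of_dvd (hqirr jj) hjq)
    obtain ⟨u, hu⟩ := hassoc
    obtain ⟨c', hc', huC⟩ := unit_is_C u.isUnit
    have hqj : qf jj = c' • f i := by rw [← hu, huC, smul_eq_C_mul, mul_comm]
    have hcc' : (starRingEnd ℂ) c' ≠ 0 := by simpa using hc'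
    have hfj : f jj = (starRingEnd ℂ c') • qf i := by
      refine reflects_unique (hsym jj) ?_
      rw [hqj]
      exact reflects_smul hc' (hf0 i) (hqf i)
    have hqi : qf i = ((starRingEnd ℂ c')⁻¹) • f jj := by
      rw [hfj, smul_smul, inv_mul_cancel₀ hcc', one_smul]
    have hiT : i ∉ T := Finset.mem_compl.mp hiS
    have hjT : jj ∉ T := Finset.mem_compl.mp hjS
    by_cases hij : i = jj
    · subst hij
      have hgood' : good (insert i T) := by
        refine ⟨c' * c, mul_ne_zero hc' hc, ?_⟩
        rw [Finset.prod_insert hiT, Finset.prod_insert hiT, hceq, hqj]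
        simp only [smul_eq_C_mul, map_mul]
        ring
      have := hmax _ hgood'
      rw [Finset.card_insert_of_notMem hiT] at this
      omega
    · have hiT' : i ∉ insert jj T := by
        simp only [Finset.mem_insert]
        push_neg
        exact ⟨hij, hiT⟩
      have hgood' : good (insert i (insert jj T)) := by
        refine ⟨(starRingEnd ℂ c')⁻¹ * c' * c,
          mul_ne_zero (mul_ne_zero (inv_ne_zero hcc') hc') hc, ?_⟩
        rw [Finset.prod_insert hiT', Finset.prod_insert hjT,
          Finset.prod_insert hiT', Finset.prod_insert hjT, hceq, hqj, hqi]
        simp only [smul_eq_C_mul, map_mul]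
        ring
      have := hmax _ hgood'
      rw [Finset.card_insert_of_notMem hiT', Finset.card_insert_of_notMem hjT] at this
      omega
  · -- the equation
    have hqeq : q = ∏ i : Fin r, qf i := by
      refine reflects_unique hq ?_
      rw [hξ]
      exact reflects_prod Finset.univ f qf (fun i _ => hf0 i) (fun i _ => hqf i)
    rw [hqeq, ← Finset.prod_mul_prod_compl T qf, hceq, hξ,
      ← Finset.prod_mul_prod_compl T f]
    simp only [smul_eq_C_mul, map_mul]
    ring
end

section
/- Let V = [[0, B₁, 0],[C₁, D₁, D₂],[C₂, 0, D₃]] : ℂ^N ⊕ H₁ ⊕ H₂ → ℂ^N ⊕ H₁ ⊕ H₂ be an isometry, and let A be a self-adjoint invertible N×N matrix satisfying C₁A^{−2}C₁*D₂ = D₂ and C₁*C₁ = A². Then V₁ = [[0, B₁],[C₁A^{−1}, D₁]] and V₂ = [[A, B₂],[C₂, D₃]] with B₂ = A^{−1}C₁*D₂ are both isometries. -/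
open ContinuousLinearMap

/-- If `V = [[0,B₁,0],[C₁,D₁,D₂],[C₂,0,D₃]]` is an isometry on `ℂᴺ ⊕ H₁ ⊕ H₂` and `A`
is a self-adjoint invertible operator with `C₁ A⁻² C₁* D₂ = D₂` and `C₁* C₁ = A²`,
then `V₁ = [[0,B₁],[C₁A⁻¹,D₁]]` and `V₂ = [[A,B₂],[C₂,D₃]]`, `B₂ = A⁻¹ C₁* D₂`,
are isometries. -/
theorem factor_isometries_zero_case {N : ℕ} {H₁ H₂ : Type*}
    [NormedAddCommGroup H₁] [InnerProductSpace ℂ H₁] [CompleteSpace H₁]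
    [NormedAddCommGroup H₂] [InnerProductSpace ℂ H₂] [CompleteSpace H₂]
    (A : EuclideanSpace ℂ (Fin N) →L[ℂ] EuclideanSpace ℂ (Fin N))
    (hA : IsUnit A) (hAsa : adjoint A = A)
    (B₁ : H₁ →L[ℂ] EuclideanSpace ℂ (Fin N)) (C₁ : EuclideanSpace ℂ (Fin N) →L[ℂ] H₁)
    (C₂ : EuclideanSpace ℂ (Fin N) →L[ℂ] H₂)
    (D₁ : H₁ →L[ℂ] H₁) (D₂ : H₂ →L[ℂ] H₁) (D₃ : H₂ →L[ℂ] H₂)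
    (hV : ∀ (e : EuclideanSpace ℂ (Fin N)) (h₁ : H₁) (h₂ : H₂),
      ‖B₁ h₁‖ ^ 2 + ‖C₁ e + D₁ h₁ + D₂ h₂‖ ^ 2 + ‖C₂ e + D₃ h₂‖ ^ 2 =
        ‖e‖ ^ 2 + ‖h₁‖ ^ 2 + ‖h₂‖ ^ 2)
    (hc1 : C₁ ∘L Ring.inverse A ∘L Ring.inverse A ∘L adjoint C₁ ∘L D₂ = D₂)
    (hc2 : adjoint C₁ ∘L C₁ = A ∘L A) :
    (∀ (e : EuclideanSpace ℂ (Fin N)) (h₁ : H₁),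
      ‖B₁ h₁‖ ^ 2 + ‖C₁ (Ring.inverse A e) + D₁ h₁‖ ^ 2 = ‖e‖ ^ 2 + ‖h₁‖ ^ 2) ∧
    (∀ (e : EuclideanSpace ℂ (Fin N)) (h₂ : H₂),
      ‖A e + Ring.inverse A (adjoint C₁ (D₂ h₂))‖ ^ 2 + ‖C₂ e + D₃ h₂‖ ^ 2 =
        ‖e‖ ^ 2 + ‖h₂‖ ^ 2) := by
  set iA := Ring.inverse A with hiA
  have hiAsa : adjoint iA = iA := by
    rw [hiA, ← ContinuousLinearMap.star_eq_adjoint, ← Ring.inverse_star,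
      ContinuousLinearMap.star_eq_adjoint, hAsa]
  have hAiA : A ∘L iA = 1 := Ring.mul_inverse_cancel A hA
  have hiAA : iA ∘L A = 1 := Ring.inverse_mul_cancel A hA
  have h100 : ∀ e : EuclideanSpace ℂ (Fin N), ‖C₁ e‖ ^ 2 + ‖C₂ e‖ ^ 2 = ‖e‖ ^ 2 := by
    intro e; have := hV e 0 0; simpa using this
  have h010 : ∀ h₁ : H₁, ‖B₁ h₁‖ ^ 2 + ‖D₁ h₁‖ ^ 2 = ‖h₁‖ ^ 2 := by
    intro h₁; have := hV 0 h₁ 0; simpa using this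
  have h001 : ∀ h₂ : H₂, ‖D₂ h₂‖ ^ 2 + ‖D₃ h₂‖ ^ 2 = ‖h₂‖ ^ 2 := by
    intro h₂; have := hV 0 0 h₂; simpa using this
  have hX : ∀ (e : EuclideanSpace ℂ (Fin N)) (h₁ : H₁),
      RCLike.re (inner ℂ (C₁ e) (D₁ h₁) : ℂ) = 0 := by
    intro e h₁
    have h := hV e h₁ 0
    simp only [map_zero, add_zero] at h
    rw [norm_add_sq (𝕜 := ℂ) (C₁ e) (D₁ h₁)] at h
    have := h100 e; have := h010 h₁
    simp only [norm_zero] at h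
    linarith
  have hY : ∀ (e : EuclideanSpace ℂ (Fin N)) (h₂ : H₂),
      RCLike.re (inner ℂ (C₁ e) (D₂ h₂) : ℂ) +
        RCLike.re (inner ℂ (C₂ e) (D₃ h₂) : ℂ) = 0 := by
    intro e h₂
    have h := hV e 0 h₂
    simp only [map_zero, add_zero] at h
    rw [norm_add_sq (𝕜 := ℂ) (C₁ e) (D₂ h₂), norm_add_sq (𝕜 := ℂ) (C₂ e) (D₃ h₂)] at h
    have := h100 e; have := h001 h₂
    simp only [norm_zero] at h
    linarith
  constructor
  · intro e h₁
    have hnorm : ‖C₁ (iA e)‖ ^ 2 = ‖e‖ ^ 2 := by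
      have key : (inner ℂ (C₁ (iA e)) (C₁ (iA e)) : ℂ) = inner ℂ e e := by
        have h1 : (inner ℂ (C₁ (iA e)) (C₁ (iA e)) : ℂ)
            = inner ℂ (iA e) ((adjoint C₁ ∘L C₁) (iA e)) := by
          simp [ContinuousLinearMap.adjoint_inner_right]
        rw [h1, hc2]
        have h2 : (A ∘L A) (iA e) = A ((A ∘L iA) e) := by simp
        rw [h2, hAiA]
        have h3 : (inner ℂ (iA e) (A ((1 : EuclideanSpace ℂ (Fin N) →L[ℂ]
            EuclideanSpace ℂ (Fin N)) e)) : ℂ) = inner ℂ (adjoint A (iA e)) e := by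
          rw [ContinuousLinearMap.adjoint_inner_left]; simp
        rw [h3, hAsa]
        have h4 : A (iA e) = (A ∘L iA) e := rfl
        rw [h4, hAiA]; simp
      have := congrArg (RCLike.re (K := ℂ)) key
      rwa [inner_self_eq_norm_sq (𝕜 := ℂ), inner_self_eq_norm_sq (𝕜 := ℂ)] at this
    rw [norm_add_sq (𝕜 := ℂ) (C₁ (iA e)) (D₁ h₁), hnorm, hX (iA e) h₁]
    have := h010 h₁
    linarith
  · intro e h₂
    set x := adjoint C₁ (D₂ h₂) with hx
    have hAe : ‖A e‖ ^ 2 = ‖C₁ e‖ ^ 2 := by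
      have key : (inner ℂ (A e) (A e) : ℂ) = inner ℂ (C₁ e) (C₁ e) := by
        have h1 : (inner ℂ (A e) (A e) : ℂ) = inner ℂ e ((A ∘L A) e) := by
          rw [← hAsa]; rw [ContinuousLinearMap.adjoint_inner_left]
          simp [hAsa]
        rw [h1, ← hc2]
        have h2 : ((adjoint C₁ ∘L C₁) e) = adjoint C₁ (C₁ e) := rfl
        rw [h2, ContinuousLinearMap.adjoint_inner_right]
      have := congrArg (RCLike.re (K := ℂ)) key
      rwa [inner_self_eq_norm_sq (𝕜 := ℂ), inner_self_eq_norm_sq (𝕜 := ℂ)] at this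
    have hcross : (inner ℂ (A e) (iA x) : ℂ) = inner ℂ (C₁ e) (D₂ h₂) := by
      have h1 : (inner ℂ (A e) (iA x) : ℂ) = inner ℂ e ((A ∘L iA) x) := by
        rw [← hAsa, ContinuousLinearMap.adjoint_inner_left, hAsa]
        rfl
      rw [h1, hAiA]
      simp only [ContinuousLinearMap.one_apply, hx]
      rw [ContinuousLinearMap.adjoint_inner_right]
    have hinv : ‖iA x‖ ^ 2 = ‖D₂ h₂‖ ^ 2 := by
      have key : (inner ℂ (iA x) (iA x) : ℂ) = inner ℂ (D₂ h₂) (D₂ h₂) := by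
        have h1 : (inner ℂ (iA x) (iA x) : ℂ) = inner ℂ x (iA (iA x)) := by
          rw [← hiAsa, ContinuousLinearMap.adjoint_inner_left, hiAsa]
        rw [h1, hx, ContinuousLinearMap.adjoint_inner_left]
        have h2 : C₁ (iA (iA (adjoint C₁ (D₂ h₂))))
            = (C₁ ∘L iA ∘L iA ∘L adjoint C₁ ∘L D₂) h₂ := rfl
        rw [h2, hc1]
      have := congrArg (RCLike.re (K := ℂ)) key
      rwa [inner_self_eq_norm_sq (𝕜 := ℂ), inner_self_eq_norm_sq (𝕜 := ℂ)] at this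
    rw [norm_add_sq (𝕜 := ℂ) (A e) (iA x), norm_add_sq (𝕜 := ℂ) (C₂ e) (D₃ h₂),
      hAe, hcross, hinv]
    have := h100 e; have := h001 h₂; have := hY e h₂
    linarith
end

section
/- Let V = [[A, B₁, B₂],[C₁, D₁, D₂],[C₂, 0, D₃]] : ℂ^N ⊕ H₁ ⊕ H₂ → ℂ^N ⊕ H₁ ⊕ H₂ be an isometry, and suppose there exist invertible N×N matrices A₁, A₂ with A = A₁A₂, A₂*A₂ = A*A + C₁*C₁, and D₂ = C₁A^{−1}B₂. Then V₁ = [[A₁, B₁],[C₁A₂^{−1}, D₁]] and V₂ = [[A₂, A₁^{−1}B₂],[C₂, D₃]] are both isometries. -/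
open ContinuousLinearMap

/-- If `V = [[A,B₁,B₂],[C₁,D₁,D₂],[C₂,0,D₃]]` is an isometry on `ℂᴺ ⊕ H₁ ⊕ H₂`, and
`A₁, A₂` are invertible with `A = A₁A₂`, `A₂*A₂ = A*A + C₁*C₁` and
`D₂ = C₁ A⁻¹ B₂`, then `V₁ = [[A₁,B₁],[C₁A₂⁻¹,D₁]]` and `V₂ = [[A₂,A₁⁻¹B₂],[C₂,D₃]]`
are isometries. -/
theorem factor_isometries_invertible_case {N : ℕ} {H₁ H₂ : Type*}
    [NormedAddCommGroup H₁] [InnerProductSpace ℂ H₁] [CompleteSpace H₁]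
    [NormedAddCommGroup H₂] [InnerProductSpace ℂ H₂] [CompleteSpace H₂]
    (A A₁ A₂ : EuclideanSpace ℂ (Fin N) →L[ℂ] EuclideanSpace ℂ (Fin N))
    (hA₁ : IsUnit A₁) (hA₂ : IsUnit A₂) (hA : A = A₁ ∘L A₂)
    (B₁ : H₁ →L[ℂ] EuclideanSpace ℂ (Fin N)) (B₂ : H₂ →L[ℂ] EuclideanSpace ℂ (Fin N))
    (C₁ : EuclideanSpace ℂ (Fin N) →L[ℂ] H₁) (C₂ : EuclideanSpace ℂ (Fin N) →L[ℂ] H₂)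
    (D₁ : H₁ →L[ℂ] H₁) (D₂ : H₂ →L[ℂ] H₁) (D₃ : H₂ →L[ℂ] H₂)
    (hV : ∀ (e : EuclideanSpace ℂ (Fin N)) (h₁ : H₁) (h₂ : H₂),
      ‖A e + B₁ h₁ + B₂ h₂‖ ^ 2 + ‖C₁ e + D₁ h₁ + D₂ h₂‖ ^ 2 + ‖C₂ e + D₃ h₂‖ ^ 2 =
        ‖e‖ ^ 2 + ‖h₁‖ ^ 2 + ‖h₂‖ ^ 2)
    (hcond : adjoint A₂ ∘L A₂ = adjoint A ∘L A + adjoint C₁ ∘L C₁)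
    (hD₂ : D₂ = C₁ ∘L Ring.inverse A ∘L B₂) :
    (∀ (e : EuclideanSpace ℂ (Fin N)) (h₁ : H₁),
      ‖A₁ e + B₁ h₁‖ ^ 2 + ‖C₁ (Ring.inverse A₂ e) + D₁ h₁‖ ^ 2 = ‖e‖ ^ 2 + ‖h₁‖ ^ 2) ∧
    (∀ (e : EuclideanSpace ℂ (Fin N)) (h₂ : H₂),
      ‖A₂ e + Ring.inverse A₁ (B₂ h₂)‖ ^ 2 + ‖C₂ e + D₃ h₂‖ ^ 2 =
        ‖e‖ ^ 2 + ‖h₂‖ ^ 2) := by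
  -- Scalar consequence of `hcond`: ‖A₂ f‖² = ‖A f‖² + ‖C₁ f‖².
  have S1 : ∀ f : EuclideanSpace ℂ (Fin N), ‖A₂ f‖ ^ 2 = ‖A f‖ ^ 2 + ‖C₁ f‖ ^ 2 := by
    intro f
    have h := congrArg (fun T : EuclideanSpace ℂ (Fin N) →L[ℂ] EuclideanSpace ℂ (Fin N) =>
      (inner ℂ (T f) f : ℂ)) hcond
    simp only [comp_apply, add_apply, inner_add_left, adjoint_inner_left,
      inner_self_eq_norm_sq_to_K] at h
    exact_mod_cast h
  -- algebraic facts about inverses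
  have hiA₂A₂ : ∀ x, Ring.inverse A₂ (A₂ x) = x := by
    intro x
    have := congrArg (fun T : EuclideanSpace ℂ (Fin N) →L[ℂ] EuclideanSpace ℂ (Fin N) => T x)
      (Ring.inverse_mul_cancel A₂ hA₂)
    simpa [mul_apply] using this
  have hA₂iA₂ : ∀ x, A₂ (Ring.inverse A₂ x) = x := by
    intro x
    have := congrArg (fun T : EuclideanSpace ℂ (Fin N) →L[ℂ] EuclideanSpace ℂ (Fin N) => T x)
      (Ring.mul_inverse_cancel A₂ hA₂)
    simpa [mul_apply] using this
  have hA₁iA₁ : ∀ x, A₁ (Ring.inverse A₁ x) = x := by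
    intro x
    have := congrArg (fun T : EuclideanSpace ℂ (Fin N) →L[ℂ] EuclideanSpace ℂ (Fin N) => T x)
      (Ring.mul_inverse_cancel A₁ hA₁)
    simpa [mul_apply] using this
  have hAmul : A = A₁ * A₂ := hA
  have hAunit : IsUnit A := hAmul ▸ hA₁.mul hA₂
  have hinvA : Ring.inverse A = Ring.inverse A₂ * Ring.inverse A₁ := by
    have h1 : A * (Ring.inverse A₂ * Ring.inverse A₁) = 1 := by
      rw [hAmul, mul_assoc, ← mul_assoc A₂, Ring.mul_inverse_cancel A₂ hA₂, one_mul,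
        Ring.mul_inverse_cancel A₁ hA₁]
    calc Ring.inverse A = Ring.inverse A * (A * (Ring.inverse A₂ * Ring.inverse A₁)) := by
          rw [h1, mul_one]
      _ = (Ring.inverse A * A) * (Ring.inverse A₂ * Ring.inverse A₁) := by rw [mul_assoc]
      _ = Ring.inverse A₂ * Ring.inverse A₁ := by
          rw [Ring.inverse_mul_cancel A hAunit, one_mul]
  constructor
  · intro e h₁
    have hA₂f : A₂ (Ring.inverse A₂ e) = e := hA₂iA₂ e
    have hAf : A (Ring.inverse A₂ e) = A₁ e := by
      rw [hA, comp_apply, hA₂f]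
    have H1 := hV (Ring.inverse A₂ e) h₁ 0
    have H2 := hV (Ring.inverse A₂ e) 0 0
    simp only [map_zero, add_zero, norm_zero, ne_eq, OfNat.ofNat_ne_zero, not_false_eq_true, zero_pow] at H1 H2
    have hS := S1 (Ring.inverse A₂ e)
    rw [hA₂f, hAf] at hS
    rw [hAf] at H1 H2
    linarith
  · intro e h₂
    set x := A₂ e + Ring.inverse A₁ (B₂ h₂) with hx
    have hA₁x : A₁ x = A e + B₂ h₂ := by
      rw [hx, map_add, hA₁iA₁, hA, comp_apply]
    have hiA₂x : Ring.inverse A₂ x = e + Ring.inverse A (B₂ h₂) := by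
      rw [hx, map_add, hiA₂A₂, hinvA, mul_apply_eq_comp]
    have hC : C₁ e + D₂ h₂ = C₁ (Ring.inverse A₂ x) := by
      rw [hiA₂x, map_add, hD₂]
      simp [comp_apply]
    have H := hV e 0 h₂
    simp only [map_zero, zero_add, add_zero, norm_zero, ne_eq, OfNat.ofNat_ne_zero, not_false_eq_true, zero_pow] at H
    have hS := S1 (Ring.inverse A₂ x)
    rw [hA₂iA₂, hA, comp_apply, hA₂iA₂, hA₁x, ← hC] at hS
    linarith
end

section
/- Let θ(s,p) = B X (I − D X)^{−1} C with B = [B₁, 0], C = [C₁; C₂], D = [[D₁, C₁A^{−1}B₂],[0, D₃]] block operators on H₁ ⊕ H₂, and X = X₁ ⊕ X₂ with X_j = φ(τ_j,s,p). Then θ(s,p) = ψ₁(s,p)ψ₂(s,p) where ψ₁(s,p) = B₁X₁(I − D₁X₁)^{−1}C₁A^{−1} and ψ₂(s,p) = A + B₂X₂(I − D₃X₂)^{−1}C₂, assuming all inverses exist and A is invertible. -/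
open scoped Matrix

/-- The Agler–Young function `φ(τ,s,p) = (2pτ − sI)(2I − sτ)⁻¹` for matrices. -/
noncomputable def phiM {n : Type*} [Fintype n] [DecidableEq n]
    (τ : Matrix n n ℂ) (s p : ℂ) : Matrix n n ℂ :=
  (((2 : ℂ) * p) • τ - s • (1 : Matrix n n ℂ)) *
    ((2 : ℂ) • (1 : Matrix n n ℂ) - s • τ)⁻¹

/-- The transfer function `θ = B X (I − D X)⁻¹ C` with `B = [B₁, 0]`, `C = [C₁; C₂]`,
`D = [[D₁, C₁A⁻¹B₂],[0,D₃]]`, `X = φ(τ₁,s,p) ⊕ φ(τ₂,s,p)` factors as `θ = ψ₁ ψ₂`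
with `ψ₁ = B₁X₁(I − D₁X₁)⁻¹C₁A⁻¹` and `ψ₂ = A + B₂X₂(I − D₃X₂)⁻¹C₂`. -/
theorem tfr_factorization {N d₁ d₂ : ℕ}
    (A : Matrix (Fin N) (Fin N) ℂ) (hA : IsUnit A)
    (B₁ : Matrix (Fin N) (Fin d₁) ℂ) (B₂ : Matrix (Fin N) (Fin d₂) ℂ)
    (C₁ : Matrix (Fin d₁) (Fin N) ℂ) (C₂ : Matrix (Fin d₂) (Fin N) ℂ)
    (D₁ : Matrix (Fin d₁) (Fin d₁) ℂ) (D₃ : Matrix (Fin d₂) (Fin d₂) ℂ)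
    (τ₁ : Matrix (Fin d₁) (Fin d₁) ℂ) (τ₂ : Matrix (Fin d₂) (Fin d₂) ℂ)
    (hτ₁ : τ₁ ∈ Matrix.unitaryGroup (Fin d₁) ℂ)
    (hτ₂ : τ₂ ∈ Matrix.unitaryGroup (Fin d₂) ℂ) (s p : ℂ)
    (h1 : IsUnit ((1 : Matrix (Fin d₁) (Fin d₁) ℂ) - D₁ * phiM τ₁ s p))
    (h2 : IsUnit ((1 : Matrix (Fin d₂) (Fin d₂) ℂ) - D₃ * phiM τ₂ s p)) :
    (Matrix.fromCols B₁ 0 : Matrix (Fin N) (Fin d₁ ⊕ Fin d₂) ℂ) *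
        Matrix.fromBlocks (phiM τ₁ s p) 0 0 (phiM τ₂ s p) *
        ((1 : Matrix (Fin d₁ ⊕ Fin d₂) (Fin d₁ ⊕ Fin d₂) ℂ) -
          Matrix.fromBlocks D₁ (C₁ * A⁻¹ * B₂) 0 D₃ *
            Matrix.fromBlocks (phiM τ₁ s p) 0 0 (phiM τ₂ s p))⁻¹ *
        Matrix.fromRows C₁ C₂ =
      (B₁ * phiM τ₁ s p * (1 - D₁ * phiM τ₁ s p)⁻¹ * C₁ * A⁻¹) *
        (A + B₂ * phiM τ₂ s p * (1 - D₃ * phiM τ₂ s p)⁻¹ * C₂) := by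
  set X₁ := phiM τ₁ s p
  set X₂ := phiM τ₂ s p
  set P := (1 : Matrix (Fin d₁) (Fin d₁) ℂ) - D₁ * X₁ with hP
  set R := (1 : Matrix (Fin d₂) (Fin d₂) ℂ) - D₃ * X₂ with hR
  set Q := C₁ * A⁻¹ * B₂ * X₂ with hQ
  have hPP : P * P⁻¹ = 1 := Matrix.mul_nonsing_inv _ ((Matrix.isUnit_iff_isUnit_det _).mp h1)
  have hPP' : P⁻¹ * P = 1 := Matrix.nonsing_inv_mul _ ((Matrix.isUnit_iff_isUnit_det _).mp h1)
  have hRR : R * R⁻¹ = 1 := Matrix.mul_nonsing_inv _ ((Matrix.isUnit_iff_isUnit_det _).mp h2)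
  have hRR' : R⁻¹ * R = 1 := Matrix.nonsing_inv_mul _ ((Matrix.isUnit_iff_isUnit_det _).mp h2)
  have hM : ((1 : Matrix (Fin d₁ ⊕ Fin d₂) (Fin d₁ ⊕ Fin d₂) ℂ) -
      Matrix.fromBlocks D₁ (C₁ * A⁻¹ * B₂) 0 D₃ *
        Matrix.fromBlocks X₁ 0 0 X₂) = Matrix.fromBlocks P (-Q) 0 R := by
    rw [Matrix.fromBlocks_multiply, ← Matrix.fromBlocks_one, sub_eq_add_neg,
      Matrix.fromBlocks_neg, Matrix.fromBlocks_add]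
    congr 1 <;> simp [hP, hR, hQ, sub_eq_add_neg, Matrix.mul_assoc]
  have hMinv : ((1 : Matrix (Fin d₁ ⊕ Fin d₂) (Fin d₁ ⊕ Fin d₂) ℂ) -
      Matrix.fromBlocks D₁ (C₁ * A⁻¹ * B₂) 0 D₃ *
        Matrix.fromBlocks X₁ 0 0 X₂)⁻¹ =
      Matrix.fromBlocks P⁻¹ (P⁻¹ * Q * R⁻¹) 0 R⁻¹ := by
    rw [hM]
    apply Matrix.inv_eq_right_inv
    rw [Matrix.fromBlocks_multiply]
    simp only [Matrix.mul_zero, Matrix.zero_mul, add_zero, zero_add, hPP, hRR]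
    rw [← Matrix.fromBlocks_one]
    congr 1
    rw [← Matrix.mul_assoc, ← Matrix.mul_assoc, hPP]
    simp [Matrix.mul_assoc, hRR]
  rw [hMinv, Matrix.fromCols_mul_fromBlocks, Matrix.fromCols_mul_fromBlocks,
    Matrix.fromCols_mul_fromRows]
  simp only [Matrix.zero_mul, Matrix.mul_zero, add_zero, zero_add]
  rw [mul_add]
  congr 1
  · rw [Matrix.mul_assoc _ A⁻¹ A,
      Matrix.nonsing_inv_mul _ ((Matrix.isUnit_iff_isUnit_det _).mp hA), Matrix.mul_one]
  · simp [hQ, Matrix.mul_assoc]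
end
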